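/- Let R = A ×_k B be the fiber product of positively graded Noetherian k-algebras over a field k, with B ≠ B_0. Then the trace of A as an R-module (via the projection π_1) equals tr_R(A) = m_A·R ⊕ ((0 :_B m_B))·R. -/

import Mathlib

/-! `R` acts on `A` through the retraction `π₁ : R → A` with section `ι₁`, so `A ≅ R ⧸ ker π₁` is
cyclic and its trace is the annihilator of `ker π₁ = 0 × m_B`, namely `{r | r₂ ∈ (0 :_B m_B)}`.
Since `B` has a nonzero element `c` of positive degree and `B₀ = k`, every `b` with `b c = 0` has
`b₀ = 0`, so `(0 :_B m_B) ⊆ m_B`; hence this ideal splits as `m_A·R ⊕ (0 :_B m_B)·R`. -/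

set_option synthInstance.maxHeartbeats 1000000
set_option maxHeartbeats 1000000

noncomputable section

/-- The fiber product `A ×ₖ B = {(a,b) : f a = g b}`, as a subalgebra of `A × B`. -/
def fiberProd {k A B : Type*} [CommSemiring k] [Semiring A] [Semiring B]
    [Algebra k A] [Algebra k B] (f : A →ₐ[k] k) (g : B →ₐ[k] k) : Subalgebra k (A × B) :=
  AlgHom.equalizer (f.comp (AlgHom.fst k A B)) (g.comp (AlgHom.snd k A B))

/-- The canonical map `ι₁ : A → A ×ₖ B`, `a ↦ (a, f a)`. -/
def fiberProdInl {k A B : Type*} [CommSemiring k] [Semiring A] [Semiring B]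
    [Algebra k A] [Algebra k B] (f : A →ₐ[k] k) (g : B →ₐ[k] k) :
    A →ₐ[k] fiberProd f g :=
  AlgHom.codRestrict ((AlgHom.id k A).prod ((Algebra.ofId k B).comp f)) (fiberProd f g)
    (fun a => by simp [fiberProd, AlgHom.mem_equalizer, Algebra.ofId_apply, AlgHom.commutes])

/-- The canonical map `ι₂ : B → A ×ₖ B`, `b ↦ (g b, b)`. -/
def fiberProdInr {k A B : Type*} [CommSemiring k] [Semiring A] [Semiring B]
    [Algebra k A] [Algebra k B] (f : A →ₐ[k] k) (g : B →ₐ[k] k) :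
    B →ₐ[k] fiberProd f g :=
  AlgHom.codRestrict (((Algebra.ofId k A).comp g).prod (AlgHom.id k B)) (fiberProd f g)
    (fun b => by simp [fiberProd, AlgHom.mem_equalizer, Algebra.ofId_apply, AlgHom.commutes])

section Graded

open DirectSum

variable {k B : Type*} [Field k] [CommRing B] [Algebra k B] (ℬ : ℕ → Submodule k B)
  [GradedAlgebra ℬ]

theorem AlgHom.apply_decompose_zero (g : B →ₐ[k] k) (hg : ∀ i, 0 < i → ∀ b ∈ ℬ i, g b = 0)
    (b : B) : g (decompose ℬ b 0) = g b := by
  classical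
  conv_rhs => rw [← sum_support_decompose ℬ b]
  rw [map_sum, Finset.sum_eq_single 0]
  · intro i _ hi
    exact hg i (Nat.pos_of_ne_zero hi) _ (decompose ℬ b i).2
  · intro h
    rw [DFinsupp.notMem_support_iff.mp h, ZeroMemClass.coe_zero, map_zero]

theorem decompose_zero_eq_zero_of_mul_eq_zero (hℬ : ℬ 0 ≤ LinearMap.range (Algebra.linearMap k B))
    {b c : B} {i : ℕ} (hc : c ∈ ℬ i) (hc0 : c ≠ 0) (hbc : b * c = 0) :
    (decompose ℬ b 0 : B) = 0 := by
  obtain ⟨t, ht⟩ := hℬ (decompose ℬ b 0).2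
  have htc : t • c = 0 := by
    have := coe_decompose_mul_of_right_mem_of_le ℬ (a := b) hc le_rfl
    rwa [hbc, Nat.sub_self, decompose_zero, DirectSum.zero_apply, ZeroMemClass.coe_zero, ← ht,
      Algebra.linearMap_apply, ← Algebra.smul_def, eq_comm] at this
  rw [← ht, (smul_eq_zero.mp htc).resolve_right hc0, map_zero]

theorem annihilator_ker_le_ker (hℬ : ℬ 0 ≤ LinearMap.range (Algebra.linearMap k B))
    (g : B →ₐ[k] k) (hg : ∀ i, 0 < i → ∀ b ∈ ℬ i, g b = 0) (hB : ∃ i, 0 < i ∧ ℬ i ≠ ⊥) :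
    (RingHom.ker g).annihilator ≤ RingHom.ker g := by
  obtain ⟨i, hi, hne⟩ := hB
  obtain ⟨c, hc, hc0⟩ := Submodule.exists_mem_ne_zero_of_ne_bot hne
  intro b hb
  have hbc : b * c = 0 := Submodule.mem_annihilator.mp hb c (hg i hi c hc)
  rw [RingHom.mem_ker, ← g.apply_decompose_zero ℬ hg,
    decompose_zero_eq_zero_of_mul_eq_zero ℬ hℬ hc hc0 hbc, map_zero]

end Graded

def traceIdeal (R M : Type*) [CommRing R] [AddCommGroup M] [Module R M] : Ideal R :=
  ⨆ φ : M →ₗ[R] R, LinearMap.range φ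

/-- For `a ∈ (0 : ker π)` the map `x ↦ ι x * a` is `R`-linear, because `ι (π s) - s ∈ ker π`. -/
theorem traceIdeal_eq_annihilator_ker {R S : Type*} [CommRing R] [CommRing S] [Module R S]
    (π : R →+* S) (ι : S →+* R) (hπι : Function.LeftInverse π ι)
    (hsmul : ∀ (r : R) (x : S), r • x = π r * x) :
    traceIdeal R S = (RingHom.ker π).annihilator := by
  apply le_antisymm
  · refine iSup_le fun φ => ?_
    rintro _ ⟨x, rfl⟩
    refine Submodule.mem_annihilator.mpr fun j hj => ?_
    rw [smul_eq_mul, mul_comm, ← smul_eq_mul, ← map_smul, hsmul, RingHom.mem_ker.mp hj,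
      zero_mul, map_zero]
  · intro a ha
    have hι : ∀ s : R, ι (π s) * a = s * a := fun s => by
      rw [← sub_eq_zero, ← sub_mul, mul_comm]
      exact Submodule.mem_annihilator.mp ha _ (by simp [RingHom.mem_ker, hπι (π s)])
    let φ : S →ₗ[R] R :=
      { toFun := fun x => ι x * a
        map_add' := fun x y => by rw [map_add, add_mul]
        map_smul' := fun s x => by
          rw [hsmul, map_mul, mul_assoc, mul_left_comm, hι, RingHom.id_apply, smul_eq_mul,
            mul_left_comm] }
    exact Ideal.mem_iSup_of_mem φ ⟨1, by simp [φ]⟩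

section FiberProd

variable {k A B : Type*} [CommRing k] [CommRing A] [CommRing B] [Algebra k A] [Algebra k B]
  (f : A →ₐ[k] k) (g : B →ₐ[k] k)

def fiberProdFst : fiberProd f g →ₐ[k] A := (AlgHom.fst k A B).comp (fiberProd f g).val

def fiberProdSnd : fiberProd f g →ₐ[k] B := (AlgHom.snd k A B).comp (fiberProd f g).val

variable {f g}

@[simp] theorem fiberProdFst_apply (r : fiberProd f g) : fiberProdFst f g r = (r : A × B).1 := rfl

@[simp] theorem fiberProdSnd_apply (r : fiberProd f g) : fiberProdSnd f g r = (r : A × B).2 := rfl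

@[simp] theorem coe_fiberProdInl (a : A) :
    (fiberProdInl f g a : A × B) = (a, algebraMap k B (f a)) := rfl

@[simp] theorem coe_fiberProdInr (b : B) :
    (fiberProdInr f g b : A × B) = (algebraMap k A (g b), b) := rfl

theorem mem_fiberProd {p : A × B} : p ∈ fiberProd f g ↔ f p.1 = g p.2 := Iff.rfl

theorem apply_fst_eq_apply_snd (r : fiberProd f g) : f (r : A × B).1 = g (r : A × B).2 := r.2

theorem mem_map_fiberProdInl_iff {I : Ideal A} (hI : I ≤ RingHom.ker f) {r : fiberProd f g} :
    r ∈ I.map (fiberProdInl f g) ↔ (r : A × B).2 = 0 ∧ (r : A × B).1 ∈ I := by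
  constructor
  · intro hr
    let J : Ideal (fiberProd f g) := RingHom.ker (fiberProdSnd f g) ⊓ I.comap (fiberProdFst f g)
    have hIJ : I.map (fiberProdInl f g) ≤ J := Ideal.map_le_iff_le_comap.mpr fun a ha => by
      simp [J, RingHom.mem_ker.mp (hI ha), ha]
    simpa [J] using hIJ hr
  · rintro ⟨h2, h1⟩
    have : fiberProdInl f g (r : A × B).1 = r := Subtype.ext <| Prod.ext rfl <| by
      simp [RingHom.mem_ker.mp (hI h1), h2]
    exact this ▸ Ideal.mem_map_of_mem _ h1

theorem mem_map_fiberProdInr_iff {I : Ideal B} (hI : I ≤ RingHom.ker g) {r : fiberProd f g} :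
    r ∈ I.map (fiberProdInr f g) ↔ (r : A × B).1 = 0 ∧ (r : A × B).2 ∈ I := by
  constructor
  · intro hr
    let J : Ideal (fiberProd f g) := RingHom.ker (fiberProdFst f g) ⊓ I.comap (fiberProdSnd f g)
    have hIJ : I.map (fiberProdInr f g) ≤ J := Ideal.map_le_iff_le_comap.mpr fun b hb => by
      simp [J, RingHom.mem_ker.mp (hI hb), hb]
    simpa [J] using hIJ hr
  · rintro ⟨h1, h2⟩
    have : fiberProdInr f g (r : A × B).2 = r := Subtype.ext <| Prod.ext (by
      simp [RingHom.mem_ker.mp (hI h2), h1]) rfl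
    exact this ▸ Ideal.mem_map_of_mem _ h2

theorem ker_fiberProdFst :
    RingHom.ker (fiberProdFst f g) = (RingHom.ker g).map (fiberProdInr f g) := by
  ext r
  rw [mem_map_fiberProdInr_iff le_rfl, RingHom.mem_ker, RingHom.mem_ker, ← apply_fst_eq_apply_snd]
  simp +contextual

theorem annihilator_ker_fiberProdFst :
    (RingHom.ker (fiberProdFst f g)).annihilator
      = (RingHom.ker g).annihilator.comap (fiberProdSnd f g) := by
  ext r
  simp only [Ideal.mem_comap, Submodule.mem_annihilator, ker_fiberProdFst, smul_eq_mul]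
  constructor
  · intro hr c hc
    simpa using congrArg (fun s : fiberProd f g => (s : A × B).2)
      (hr _ (Ideal.mem_map_of_mem (fiberProdInr f g) hc))
  · intro hr j hj
    rw [mem_map_fiberProdInr_iff le_rfl] at hj
    exact Subtype.ext <| Prod.ext (by simp [hj.1]) (by simpa using hr _ hj.2)

theorem map_fiberProdInl_sup_map_fiberProdInr {I : Ideal B} (hI : I ≤ RingHom.ker g) :
    (RingHom.ker f).map (fiberProdInl f g) ⊔ I.map (fiberProdInr f g)
      = I.comap (fiberProdSnd f g) := by
  apply le_antisymm
  · refine sup_le (fun r hr => ?_) fun r hr => ?_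
    · simp [((mem_map_fiberProdInl_iff le_rfl).mp hr).1]
    · exact ((mem_map_fiberProdInr_iff hI).mp hr).2
  · intro r hr
    have hg : g (r : A × B).2 = 0 := hI hr
    refine Submodule.mem_sup.mpr ⟨⟨((r : A × B).1, 0), ?_⟩, ?_, ⟨(0, (r : A × B).2), ?_⟩, ?_, ?_⟩
    · simp [mem_fiberProd, apply_fst_eq_apply_snd, hg]
    · rw [mem_map_fiberProdInl_iff le_rfl]
      simp [RingHom.mem_ker, apply_fst_eq_apply_snd, hg]
    · simp [mem_fiberProd, hg]
    · rw [mem_map_fiberProdInr_iff hI]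
      exact ⟨rfl, hr⟩
    · exact Subtype.ext (Prod.ext (add_zero _) (zero_add _))

theorem map_fiberProdInl_inf_map_fiberProdInr {I : Ideal B} (hI : I ≤ RingHom.ker g) :
    (RingHom.ker f).map (fiberProdInl f g) ⊓ I.map (fiberProdInr f g) = ⊥ := by
  refine eq_bot_iff.mpr fun r hr => ?_
  rw [Submodule.mem_inf, mem_map_fiberProdInl_iff le_rfl, mem_map_fiberProdInr_iff hI] at hr
  exact Subtype.ext <| Prod.ext hr.2.1 hr.1.1

end FiberProd

theorem fiberProd_trace_of_first_factor_general {k A B : Type*} [Field k] [CommRing A] [CommRing B]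
    [Algebra k A] [Algebra k B]
    (ℬ : ℕ → Submodule k B)
    [GradedAlgebra ℬ]
    (hℬ : ℬ 0 ≤ LinearMap.range (Algebra.linearMap k B))
    (f : A →ₐ[k] k) (g : B →ₐ[k] k)
    (hg : ∀ i, 0 < i → ∀ b ∈ ℬ i, g b = 0)
    (hB : ∃ i, 0 < i ∧ ℬ i ≠ ⊥)
    -- `A` as an `R`-module via `π₁`
    [Module (fiberProd f g) A]
    (hcomp : ∀ (r : fiberProd f g) (x : A), r • x = ((r : A × B).1) * x) :
    (⨆ φ : A →ₗ[fiberProd f g] fiberProd f g, LinearMap.range φ)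
        = Ideal.map (fiberProdInl f g) (RingHom.ker f)
            ⊔ Ideal.map (fiberProdInr f g) ((RingHom.ker g : Ideal B).annihilator) ∧
      Ideal.map (fiberProdInl f g) (RingHom.ker f)
          ⊓ Ideal.map (fiberProdInr f g) ((RingHom.ker g : Ideal B).annihilator) = ⊥ := by
  have hann := annihilator_ker_le_ker ℬ hℬ g hg hB
  refine ⟨?_, map_fiberProdInl_inf_map_fiberProdInr hann⟩
  change traceIdeal (fiberProd f g) A = _
  rw [traceIdeal_eq_annihilator_ker (fiberProdFst f g : fiberProd f g →+* A)
    (fiberProdInl f g) (fun _ => rfl) hcomp, RingHom.ker_coe_toRingHom,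
    annihilator_ker_fiberProdFst, map_fiberProdInl_sup_map_fiberProdInr hann]

/-- Let `R = A ×ₖ B` be the fiber product of positively graded Noetherian
`k`-algebras over a field `k`, with `B ≠ B₀`. Then the trace of `A` as an `R`-module (via the
projection `π₁`) equals `tr_R(A) = m_A·R ⊕ (0 :_B m_B)·R`. -/
theorem fiberProd_trace_of_first_factor {k A B : Type*} [Field k] [CommRing A] [CommRing B]
    [Algebra k A] [Algebra k B] [IsNoetherianRing A] [IsNoetherianRing B]
    (𝒜 : ℕ → Submodule k A) (ℬ : ℕ → Submodule k B)
    [GradedAlgebra 𝒜] [GradedAlgebra ℬ]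
    (h𝒜 : 𝒜 0 ≤ LinearMap.range (Algebra.linearMap k A))
    (hℬ : ℬ 0 ≤ LinearMap.range (Algebra.linearMap k B))
    (f : A →ₐ[k] k) (g : B →ₐ[k] k)
    (hf : ∀ i, 0 < i → ∀ a ∈ 𝒜 i, f a = 0)
    (hg : ∀ i, 0 < i → ∀ b ∈ ℬ i, g b = 0)
    (hB : ∃ i, 0 < i ∧ ℬ i ≠ ⊥)
    -- `A` as an `R`-module via `π₁`
    [Module (fiberProd f g) A]
    (hcomp : ∀ (r : fiberProd f g) (x : A), r • x = ((r : A × B).1) * x) :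
    (⨆ φ : A →ₗ[fiberProd f g] fiberProd f g, LinearMap.range φ)
        = Ideal.map (fiberProdInl f g) (RingHom.ker f)
            ⊔ Ideal.map (fiberProdInr f g) ((RingHom.ker g : Ideal B).annihilator) ∧
      Ideal.map (fiberProdInl f g) (RingHom.ker f)
          ⊓ Ideal.map (fiberProdInr f g) ((RingHom.ker g : Ideal B).annihilator) = ⊥ :=
  fiberProd_trace_of_first_factor_general ℬ hℬ f g hg hB hcomp
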